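/- arXiv:2308.04223 — 3 statements merged into one kernel-verified Lean document; each statement's English description precedes it below -/
import Mathlib

section
/- Fix n ≥ 2, real numbers k_1, …, k_n, g > 0 and gd ∈ ℝ. Define B ∈ ℝ^{n×n} by B_{ii} = −k_i for 1 ≤ i ≤ n−1, B_{i,i+1} = 1 for 1 ≤ i ≤ n−2, B_{n−1,n} = g, B_{i+1,i} = −1 for 1 ≤ i ≤ n−1, B_{nn} = −k_n g − gd/g, and all other entries zero. Let H = diag(1, …, 1, g) ∈ ℝ^{n×n} and Hd = diag(0, …, 0, gd). Then BᵀH + HB + Hd = −Q, where Q = diag(2k_1, …, 2k_{n−1}, 2k_n g² + gd). Moreover, if k_i > 0 for i = 1, …, n−1, and if g ≥ g_{0l} > 0, |gd| ≤ g_{1u}, and k_n > g_{1u}/(2g_{0l}²), then Q is positive definite. -/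
open Matrix

/-- **Equations (61)–(63) in the proof of Lemma 4 of the paper.**
For the transformed closed-loop state matrix `B` (with gain value `g = g(x)` and
`gd = ġ(x)`), the Lyapunov weight `H = diag(1,…,1,g)` and `Hd = Ḣ = diag(0,…,0,gd)`, one
has `BᵀH + HB + Hd = -Q` with `Q = diag(2k₁,…,2k_{n-1}, 2kₙg² + gd)`; moreover `Q` is
positive definite provided `kᵢ > 0` for `i < n`, `g ≥ g_{0l} > 0`, `|gd| ≤ g_{1u}` and
`kₙ > g_{1u}/(2g_{0l}²)`.

Indices are 0-based: row/column `n-1` corresponds to the paper's index `n`. -/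
theorem stmt7 (n : ℕ) (hn : 2 ≤ n) (k : Fin n → ℝ) (g gd g0l g1u : ℝ) (hg : 0 < g)
    (B H Hd Q : Matrix (Fin n) (Fin n) ℝ)
    (hB : B = Matrix.of fun (i j : Fin n) =>
      if i = j then (if (i : ℕ) = n - 1 then -k i * g - gd / g else -k i)
      else if (j : ℕ) = (i : ℕ) + 1 then (if (i : ℕ) = n - 2 then g else 1)
      else if (i : ℕ) = (j : ℕ) + 1 then -1
      else 0)
    (hH : H = Matrix.diagonal fun (i : Fin n) => if (i : ℕ) = n - 1 then g else 1)
    (hHd : Hd = Matrix.diagonal fun (i : Fin n) => if (i : ℕ) = n - 1 then gd else 0)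
    (hQ : Q = Matrix.diagonal fun (i : Fin n) =>
      if (i : ℕ) = n - 1 then 2 * k i * g ^ 2 + gd else 2 * k i) :
    Bᵀ * H + H * B + Hd = -Q ∧
    ((∀ i : Fin n, (i : ℕ) < n - 1 → 0 < k i) → 0 < g0l → g0l ≤ g → |gd| ≤ g1u →
      g1u / (2 * g0l ^ 2) < k ⟨n - 1, by omega⟩ → Q.PosDef) := by
  have hg' : g ≠ 0 := ne_of_gt hg
  constructor
  · subst hB hH hHd hQ
    ext i j
    simp only [Matrix.add_apply, Matrix.mul_diagonal, Matrix.diagonal_mul,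
      Matrix.transpose_apply, Matrix.of_apply, Matrix.diagonal_apply, Matrix.neg_apply]
    by_cases hij : i = j
    · subst hij
      by_cases h1 : (i : ℕ) = n - 1
      · simp only [if_pos rfl, if_pos h1, ↓reduceIte]
        field_simp
        ring
      · simp [h1]
        ring
    · have hij' : j ≠ i := fun h => hij h.symm
      have hijn : ¬ ((i : ℕ) = (j : ℕ)) := fun h => hij (Fin.ext h)
      simp only [if_neg hij, if_neg hij', if_neg hijn]
      by_cases h1 : (j : ℕ) = (i : ℕ) + 1
      · have h2 : ¬ ((i : ℕ) = (j : ℕ) + 1) := by omega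
        simp only [if_pos h1, if_neg h2, if_pos (by omega : (i:ℕ) = (j:ℕ)+1 → False) ]
        by_cases h3 : (i : ℕ) = n - 2
        · have h4 : (j : ℕ) = n - 1 := by omega
          have h5 : ¬ ((i : ℕ) = n - 1) := by omega
          have h6 : ¬ (n - 2 = n - 1) := by omega
          simp [h3, h4, h5, h6]
        · have h4 : ¬ ((j : ℕ) = n - 1) := by
            intro h; have := j.isLt; omega
          have h5' : ¬ ((i : ℕ) = n - 1) := by
            have := j.isLt; omega
          simp [h3, h4, h5']
      · by_cases h2 : (i : ℕ) = (j : ℕ) + 1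
        · have h3 : ¬ ((j : ℕ) = n - 2) → True := fun _ => trivial
          simp only [if_neg h1, if_pos h2]
          by_cases h4 : (j : ℕ) = n - 2
          · have h5 : (i : ℕ) = n - 1 := by omega
            have h6 : ¬ ((j : ℕ) = n - 1) := by omega
            have h7 : ¬ (n - 2 = n - 1) := by omega
            simp [h4, h5, h6, h7]
          · have h5 : ¬ ((i : ℕ) = n - 1) := by
              intro h; have := i.isLt; omega
            have h6 : ¬ ((j : ℕ) = n - 1) := by
              have := i.isLt; omega
            simp [h4, h5, h6]
        · simp [h1, h2]
  · intro hk hg0l hg0lg hgd hkn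
    subst hQ
    rw [Matrix.posDef_diagonal_iff]
    intro i
    by_cases h1 : (i : ℕ) = n - 1
    · simp only [if_pos h1]
      have hkneq : k ⟨n - 1, by omega⟩ = k i := by congr 1; exact (Fin.ext h1.symm)
      rw [hkneq] at hkn
      have h2 : g1u / (2 * g0l ^ 2) < k i := hkn
      have hgd1 : -g1u ≤ gd := (abs_le.mp hgd).1
      have hg1u : 0 ≤ g1u := le_trans (abs_nonneg gd) hgd
      have hki : g1u < k i * (2 * g0l ^ 2) := by
        rwa [div_lt_iff₀ (by positivity)] at h2
      have hki0 : 0 < k i := by nlinarith [sq_nonneg g0l]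
      have hgsq : g0l ^ 2 ≤ g ^ 2 := by nlinarith
      nlinarith [mul_le_mul_of_nonneg_left hgsq hki0.le]
    · simp only [if_neg h1]
      have := hk i (by have := i.isLt; omega)
      linarith
end

section
/- Fix n ≥ 2, constants k_1, …, k_n > 0, η > 0, and N_ζ ∈ ℕ. Let g : [0,∞) → ℝ be continuously differentiable with g(t) ≥ g_{0l} > 0 for all t, let Φ : [0,∞) → ℝ^{N_ζ} be continuous, and let P : [0,∞) → ℝ^{N_ζ×N_ζ} be differentiable with P(t) symmetric invertible for all t. Define B(t) ∈ ℝ^{n×n} by B_{ii} = −k_i for 1 ≤ i ≤ n−1, B_{i,i+1} = 1 for 1 ≤ i ≤ n−2, B_{n−1,n} = g(t), B_{i+1,i} = −1 for 1 ≤ i ≤ n−1, B_{nn} = −k_n g(t) − g'(t)/g(t), other entries zero; let b = (0,…,0,1)ᵀ ∈ ℝⁿ, H(t) = diag(1,…,1,g(t)), and Q(t) = diag(2k_1,…,2k_{n−1}, 2k_n g(t)² + g'(t)). Suppose z : [0,∞) → ℝⁿ and W̃ : [0,∞) → ℝ^{N_ζ} are differentiable and satisfy ż(t) = B(t)z(t)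 + bΦ(t)ᵀW̃(t) and Ẇ̃(t) = −η g(t) P(t)Φ(t)(bᵀz(t)). Then the function V₁(t) := (1/2)z(t)ᵀH(t)z(t) + (1/(2η))W̃(t)ᵀP(t)^{-1}W̃(t) is differentiable with V̇₁(t) = −(1/2)z(t)ᵀQ(t)z(t) + (1/(2η))W̃(t)ᵀ(d/dt)(P(t)^{-1})W̃(t) for all t. -/
/-!
Differentiating `V₁` along the dynamics, the `z`-part contributes
`½ zᵀ(BᵀH + HB + Ḣ)z + (ΦᵀW̃) g (bᵀz)` because `H` is symmetric with `Hb = g b`, and the `W̃`-part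
contributes `(1/(2η)) W̃ᵀ (d/dt P⁻¹) W̃ − g (bᵀz)(ΦᵀW̃)` because `P⁻¹` is symmetric and
`P⁻¹ P Φ = Φ`; the cross terms cancel. An entrywise computation gives `BᵀH + HB + Ḣ = −Q`:
the entry `g` of `B` above the diagonal balances `H_nn B_{n,n-1} = −g`, and the term `−ġ/g`
of `B_nn` absorbs `Ḣ_nn = ġ`.
-/

open Matrix

section MatrixCalculus

variable {m n : Type*} [Fintype n] {t : ℝ}

theorem hasDerivAt_dotProduct {u v : ℝ → n → ℝ} {u' v' : n → ℝ}
    (hu : HasDerivAt u u' t) (hv : HasDerivAt v v' t) :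
    HasDerivAt (fun s => u s ⬝ᵥ v s) (u' ⬝ᵥ v t + u t ⬝ᵥ v') t := by
  simpa [dotProduct, Finset.sum_add_distrib] using HasDerivAt.fun_sum (u := Finset.univ)
    fun i _ => (hasDerivAt_pi.mp hu i).mul (hasDerivAt_pi.mp hv i)

theorem hasDerivAt_mulVec {M : ℝ → Matrix m n ℝ} {M' : Matrix m n ℝ} {v : ℝ → n → ℝ}
    {v' : n → ℝ} (hM : ∀ i j, HasDerivAt (fun s => M s i j) (M' i j) t)
    (hv : HasDerivAt v v' t) :
    HasDerivAt (fun s => M s *ᵥ v s) (M' *ᵥ v t + M t *ᵥ v') t :=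
  hasDerivAt_pi.mpr fun i => hasDerivAt_dotProduct (hasDerivAt_pi.mpr (hM i)) hv

theorem Matrix.IsSymm.dotProduct_mulVec_comm {M : Matrix n n ℝ} (hM : M.IsSymm)
    (x y : n → ℝ) : x ⬝ᵥ M *ᵥ y = y ⬝ᵥ M *ᵥ x := by
  rw [dotProduct_mulVec, ← mulVec_transpose, hM.eq, dotProduct_comm]

theorem hasDerivAt_dotProduct_mulVec_self {M : ℝ → Matrix n n ℝ} {M' : Matrix n n ℝ}
    {x : ℝ → n → ℝ} {x' : n → ℝ} (hM : ∀ i j, HasDerivAt (fun s => M s i j) (M' i j) t)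
    (hx : HasDerivAt x x' t) (hsymm : (M t).IsSymm) :
    HasDerivAt (fun s => x s ⬝ᵥ M s *ᵥ x s) (2 * (x' ⬝ᵥ M t *ᵥ x t) + x t ⬝ᵥ M' *ᵥ x t) t := by
  convert hasDerivAt_dotProduct hx (hasDerivAt_mulVec hM hx) using 1
  rw [dotProduct_add, hsymm.dotProduct_mulVec_comm (x t) x']
  ring

theorem Matrix.IsSymm.dotProduct_lyapunov_mulVec {M : Matrix n n ℝ} (hM : M.IsSymm)
    (A : Matrix n n ℝ) (x : n → ℝ) :
    x ⬝ᵥ (Aᵀ * M + M * A) *ᵥ x = 2 * ((A *ᵥ x) ⬝ᵥ M *ᵥ x) := by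
  rw [add_mulVec, dotProduct_add, ← mulVec_mulVec, ← mulVec_mulVec, mulVec_transpose,
    dotProduct_comm x, ← dotProduct_mulVec, dotProduct_comm (M *ᵥ x),
    hM.dotProduct_mulVec_comm x]
  ring

end MatrixCalculus

section MatrixInverse

variable {n : Type*} [Fintype n] [DecidableEq n] {A : ℝ → Matrix n n ℝ} {t : ℝ}

theorem differentiableAt_det (hA : ∀ i j, DifferentiableAt ℝ (fun s => A s i j) t) :
    DifferentiableAt ℝ (fun s => (A s).det) t := by
  simp only [det_apply, Units.smul_def, zsmul_eq_mul]
  exact .fun_sum fun σ _ => (differentiableAt_const _).mul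
    (.fun_finsetProd fun i _ => hA (σ i) i)

-- Cramer's rule: `A⁻¹ i j = det (A with row j replaced by eᵢ) / det A`.
theorem differentiableAt_inv_apply (hA : ∀ i j, DifferentiableAt ℝ (fun s => A s i j) t)
    (hdet : IsUnit (A t).det) (i j : n) :
    DifferentiableAt ℝ (fun s => (A s)⁻¹ i j) t := by
  have hcramer : (fun s => (A s)⁻¹ i j)
      = fun s => ((A s).det)⁻¹ * ((A s).updateRow j (Pi.single i 1)).det := by
    funext s
    rw [inv_def, Matrix.smul_apply, Ring.inverse_eq_inv', adjugate_apply, smul_eq_mul]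
  rw [hcramer]
  refine ((differentiableAt_det hA).inv hdet.ne_zero).mul (differentiableAt_det fun a b => ?_)
  rcases eq_or_ne a j with rfl | h
  · simp
  · simpa [updateRow_ne h] using hA a b

end MatrixInverse

section Lyapunov

variable {ι κ : Type*} [Fintype ι] [Fintype κ] [DecidableEq κ]

theorem hasDerivAt_adaptiveLyapunov {z : ℝ → ι → ℝ} {W : ℝ → κ → ℝ}
    {H : ℝ → Matrix ι ι ℝ} {P : ℝ → Matrix κ κ ℝ} {B H' Q : Matrix ι ι ℝ} {R : Matrix κ κ ℝ}
    {b : ι → ℝ} {φ : κ → ℝ} {η γ t : ℝ} (hη : η ≠ 0)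
    (hHsymm : (H t).IsSymm) (hPsymm : (P t).IsSymm) (hPdet : IsUnit (P t).det)
    (hHb : H t *ᵥ b = γ • b) (hBHQ : Bᵀ * H t + H t * B + H' = -Q)
    (hH : ∀ i j, HasDerivAt (fun s => H s i j) (H' i j) t)
    (hR : ∀ i j, HasDerivAt (fun s => (P s)⁻¹ i j) (R i j) t)
    (hz : HasDerivAt z (B *ᵥ z t + (φ ⬝ᵥ W t) • b) t)
    (hW : HasDerivAt W (-(η * γ * (b ⬝ᵥ z t)) • (P t *ᵥ φ)) t) :
    HasDerivAt (fun s => 1 / 2 * (z s ⬝ᵥ H s *ᵥ z s) + 1 / (2 * η) * (W s ⬝ᵥ (P s)⁻¹ *ᵥ W s))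
      (-(1 / 2) * (z t ⬝ᵥ Q *ᵥ z t) + 1 / (2 * η) * (W t ⬝ᵥ R *ᵥ W t)) t := by
  have hV := ((hasDerivAt_dotProduct_mulVec_self hH hz hHsymm).const_mul (1 / 2)).add
    ((hasDerivAt_dotProduct_mulVec_self hR hW hPsymm.inv).const_mul (1 / (2 * η)))
  have hzz : z t ⬝ᵥ Q *ᵥ z t = -(2 * ((B *ᵥ z t) ⬝ᵥ H t *ᵥ z t) + z t ⬝ᵥ H' *ᵥ z t) := by
    rw [← hHsymm.dotProduct_lyapunov_mulVec, ← dotProduct_add, ← add_mulVec, hBHQ,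
      neg_mulVec, dotProduct_neg, neg_neg]
  have hzb : b ⬝ᵥ H t *ᵥ z t = γ * (b ⬝ᵥ z t) := by
    rw [hHsymm.dotProduct_mulVec_comm, hHb, dotProduct_smul, smul_eq_mul, dotProduct_comm]
  have hWφ : (P t *ᵥ φ) ⬝ᵥ (P t)⁻¹ *ᵥ W t = φ ⬝ᵥ W t := by
    rw [hPsymm.inv.dotProduct_mulVec_comm, mulVec_mulVec, nonsing_inv_mul _ hPdet, one_mulVec,
      dotProduct_comm]
  refine hV.congr_deriv ?_
  rw [hzz, add_dotProduct, smul_dotProduct, hzb, smul_dotProduct, hWφ, smul_eq_mul, smul_eq_mul]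
  field_simp
  ring

end Lyapunov

section ClosedLoop

def lastEntryDiagonal (n : ℕ) (a c : ℝ) : Matrix (Fin n) (Fin n) ℝ :=
  diagonal fun i => if (i : ℕ) = n - 1 then a else c

variable {n : ℕ}

-- The paper's `B(t)` with `g(t), ġ(t)` frozen to `γ, γ'`; `H(t)` is `lastEntryDiagonal n (g t) 1`.
noncomputable def closedLoopMatrix (k : Fin n → ℝ) (γ γ' : ℝ) : Matrix (Fin n) (Fin n) ℝ :=
  Matrix.of fun i j =>
    if i = j then (if (i : ℕ) = n - 1 then -k i * γ - γ' / γ else -k i)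
    else if (j : ℕ) = (i : ℕ) + 1 then (if (i : ℕ) = n - 2 then γ else 1)
    else if (i : ℕ) = (j : ℕ) + 1 then -1
    else 0

theorem lastEntryDiagonal_isSymm (a c : ℝ) : (lastEntryDiagonal n a c).IsSymm :=
  isSymm_diagonal _

theorem lastEntryDiagonal_mulVec_last (a c : ℝ) :
    lastEntryDiagonal n a c *ᵥ (fun i : Fin n => if (i : ℕ) = n - 1 then 1 else 0)
      = a • fun i : Fin n => if (i : ℕ) = n - 1 then 1 else 0 := by
  ext i
  simp only [lastEntryDiagonal, mulVec_diagonal, Pi.smul_apply, smul_eq_mul]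
  split_ifs <;> ring

theorem hasDerivAt_lastEntryDiagonal_apply {g : ℝ → ℝ} {g' t : ℝ} (hg : HasDerivAt g g' t)
    (i j : Fin n) :
    HasDerivAt (fun s => lastEntryDiagonal n (g s) 1 i j) (lastEntryDiagonal n g' 0 i j) t := by
  simp only [lastEntryDiagonal, diagonal_apply]
  split_ifs
  · exact hg
  · exact hasDerivAt_const t 1
  · exact hasDerivAt_const t 0

theorem closedLoopMatrix_lyapunov (k : Fin n → ℝ) {γ : ℝ} (hγ : γ ≠ 0) (γ' : ℝ) :
    (closedLoopMatrix k γ γ')ᵀ * lastEntryDiagonal n γ 1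
        + lastEntryDiagonal n γ 1 * closedLoopMatrix k γ γ' + lastEntryDiagonal n γ' 0
      = -diagonal fun i : Fin n => if (i : ℕ) = n - 1 then 2 * k i * γ ^ 2 + γ' else 2 * k i := by
  ext i j
  simp only [lastEntryDiagonal, Matrix.add_apply, Matrix.neg_apply, mul_diagonal, diagonal_mul,
    transpose_apply, closedLoopMatrix, of_apply, diagonal_apply]
  rcases eq_or_ne i j with rfl | hij
  · simp only [if_true]
    split_ifs
    · field_simp
      ring
    · ring
  · have hij' : (i : ℕ) ≠ j := Fin.val_ne_of_ne hij
    simp only [if_neg hij, if_neg hij.symm]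
    split_ifs <;> first | omega | ring

end ClosedLoop

-- Indices are 0-based: row/column `n - 1` is the paper's index `n`.
theorem stmt9_general (n Nζ : ℕ) (k : Fin n → ℝ) (η : ℝ) (hη : 0 < η)
    (g g' : ℝ → ℝ) (g0l : ℝ) (hg0l : 0 < g0l) (hgl : ∀ t, g0l ≤ g t)
    (hg : ∀ t, HasDerivAt g (g' t) t)
    (Φ : ℝ → (Fin Nζ → ℝ))
    (P : ℝ → Matrix (Fin Nζ) (Fin Nζ) ℝ)
    (hPsym : ∀ t, (P t).IsHermitian) (hPinv : ∀ t, IsUnit (P t).det)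
    (hPdiff : ∀ t i j, DifferentiableAt ℝ (fun s => P s i j) t)
    (b : Fin n → ℝ) (hb : b = fun (i : Fin n) => if (i : ℕ) = n - 1 then 1 else 0)
    (B : ℝ → Matrix (Fin n) (Fin n) ℝ)
    (hB : ∀ t, B t = Matrix.of fun (i j : Fin n) =>
      if i = j then (if (i : ℕ) = n - 1 then -k i * g t - g' t / g t else -k i)
      else if (j : ℕ) = (i : ℕ) + 1 then (if (i : ℕ) = n - 2 then g t else 1)
      else if (i : ℕ) = (j : ℕ) + 1 then -1
      else 0)
    (H : ℝ → Matrix (Fin n) (Fin n) ℝ)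
    (hH : ∀ t, H t = Matrix.diagonal fun (i : Fin n) =>
      if (i : ℕ) = n - 1 then g t else 1)
    (Q : ℝ → Matrix (Fin n) (Fin n) ℝ)
    (hQ : ∀ t, Q t = Matrix.diagonal fun (i : Fin n) =>
      if (i : ℕ) = n - 1 then 2 * k i * (g t) ^ 2 + g' t else 2 * k i)
    (z : ℝ → (Fin n → ℝ)) (W : ℝ → (Fin Nζ → ℝ))
    (hz : ∀ t, HasDerivAt z ((B t).mulVec (z t) + (Φ t ⬝ᵥ W t) • b) t)
    (hW : ∀ t, HasDerivAt W ((-(η * g t * (b ⬝ᵥ z t))) • ((P t).mulVec (Φ t))) t)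
    (V₁ : ℝ → ℝ)
    (hV₁ : V₁ = fun t => (1 / 2) * (z t ⬝ᵥ (H t).mulVec (z t)) +
      (1 / (2 * η)) * (W t ⬝ᵥ ((P t)⁻¹).mulVec (W t))) :
    ∀ t, HasDerivAt V₁
      (-(1 / 2) * (z t ⬝ᵥ (Q t).mulVec (z t)) +
        (1 / (2 * η)) *
          (W t ⬝ᵥ (Matrix.of fun (i j : Fin Nζ) =>
            deriv (fun s => (P s)⁻¹ i j) t).mulVec (W t))) t := by
  intro t
  obtain rfl : H = fun s => lastEntryDiagonal n (g s) 1 := funext hH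
  subst hV₁ hb
  refine hasDerivAt_adaptiveLyapunov hη.ne' (lastEntryDiagonal_isSymm _ _)
    (isHermitian_iff_isSymm.mp (hPsym t)) (hPinv t) (lastEntryDiagonal_mulVec_last _ _) ?_
    (hasDerivAt_lastEntryDiagonal_apply (hg t))
    (fun i j => (differentiableAt_inv_apply (hPdiff t) (hPinv t) i j).hasDerivAt) (hz t) (hW t)
  rw [hB t, hQ t]
  exact closedLoopMatrix_lyapunov k (hg0l.trans_le (hgl t)).ne' (g' t)

/-- **Lyapunov derivative computation (equations (64)–(65)) in the proof of Lemma 4.**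
Along the transformed nominal RTPL closed-loop dynamics
`ż = B(t)z + b Φ(t)ᵀ W̃`, `Ẇ̃ = -η g(t) P(t) Φ(t) (bᵀz)`, the function
`V₁ = (1/2) zᵀ H z + (1/(2η)) W̃ᵀ P⁻¹ W̃` satisfies
`V̇₁ = -(1/2) zᵀ Q z + (1/(2η)) W̃ᵀ (d/dt)(P⁻¹) W̃`.

Indices are 0-based: row/column `n-1` corresponds to the paper's index `n`. -/
theorem stmt9 (n Nζ : ℕ) (hn : 2 ≤ n) (k : Fin n → ℝ) (η : ℝ) (hη : 0 < η)
    (g g' : ℝ → ℝ) (g0l : ℝ) (hg0l : 0 < g0l) (hgl : ∀ t, g0l ≤ g t)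
    (hg : ∀ t, HasDerivAt g (g' t) t) (hg'cont : Continuous g')
    (Φ : ℝ → (Fin Nζ → ℝ)) (hΦ : Continuous Φ)
    (P : ℝ → Matrix (Fin Nζ) (Fin Nζ) ℝ)
    (hPsym : ∀ t, (P t).IsHermitian) (hPinv : ∀ t, IsUnit (P t).det)
    (hPdiff : ∀ t i j, DifferentiableAt ℝ (fun s => P s i j) t)
    (b : Fin n → ℝ) (hb : b = fun (i : Fin n) => if (i : ℕ) = n - 1 then 1 else 0)
    (B : ℝ → Matrix (Fin n) (Fin n) ℝ)
    (hB : ∀ t, B t = Matrix.of fun (i j : Fin n) =>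
      if i = j then (if (i : ℕ) = n - 1 then -k i * g t - g' t / g t else -k i)
      else if (j : ℕ) = (i : ℕ) + 1 then (if (i : ℕ) = n - 2 then g t else 1)
      else if (i : ℕ) = (j : ℕ) + 1 then -1
      else 0)
    (H : ℝ → Matrix (Fin n) (Fin n) ℝ)
    (hH : ∀ t, H t = Matrix.diagonal fun (i : Fin n) =>
      if (i : ℕ) = n - 1 then g t else 1)
    (Q : ℝ → Matrix (Fin n) (Fin n) ℝ)
    (hQ : ∀ t, Q t = Matrix.diagonal fun (i : Fin n) =>
      if (i : ℕ) = n - 1 then 2 * k i * (g t) ^ 2 + g' t else 2 * k i)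
    (z : ℝ → (Fin n → ℝ)) (W : ℝ → (Fin Nζ → ℝ))
    (hz : ∀ t, HasDerivAt z ((B t).mulVec (z t) + (Φ t ⬝ᵥ W t) • b) t)
    (hW : ∀ t, HasDerivAt W ((-(η * g t * (b ⬝ᵥ z t))) • ((P t).mulVec (Φ t))) t)
    (V₁ : ℝ → ℝ)
    (hV₁ : V₁ = fun t => (1 / 2) * (z t ⬝ᵥ (H t).mulVec (z t)) +
      (1 / (2 * η)) * (W t ⬝ᵥ ((P t)⁻¹).mulVec (W t))) :
    ∀ t, HasDerivAt V₁
      (-(1 / 2) * (z t ⬝ᵥ (Q t).mulVec (z t)) +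
        (1 / (2 * η)) *
          (W t ⬝ᵥ (Matrix.of fun (i j : Fin Nζ) =>
            deriv (fun s => (P s)⁻¹ i j) t).mulVec (W t))) t :=
  stmt9_general n Nζ k η hη g g' g0l hg0l hgl hg Φ P hPsym hPinv hPdiff b hb B hB H hH Q hQ z W hz
    hW V₁ hV₁
end

section
/- Assume the positive definite time-varying SMRLS gain matrix P(t) ∈ ℝ^{N×N} is differentiable and satisfies, for all t: (i) P(t) is symmetric positive definite with λ_max(P(t)) ≤ p₀ and λ_min(P(t)) ≥ q₀ > 0; (ii) the derivative of its inverse decomposes as d/dt(P_S^{-1}(t)) = Ṗ_{Sζ}^{-1}(t) + Ṗ_{Sζ̄}^{-1}(t), where P_S = S_ζPS_ζᵀ for a fixed orthogonal matrix S_ζ, Ṗ_{Sζ}^{-1} has the block form [[B₁(t), 0],[0, 0]] with B₁(t) = Φ_ζ(t)Φ_ζ(t)ᵀ − Φ_{aζ}(t)Φ_{aζ}(t)ᵀ for regressor vectors Φ_ζ(t), Φ_{aζ}(t) ∈ ℝ^{N_ζ} whose components lie in [0,1], and Ṗ_{Sζ̄}^{-1}(t) is symmetric with λ_max(Ṗ_{Sζ̄}^{-1}(t))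 ≤ γ for a constant γ > 0. Let P_ζ(t) = U_ζP_S(t)U_ζᵀ with U_ζ = [I_{N_ζ×N_ζ} 0_{N_ζ×(N−N_ζ)}]. Then there exists a constant σ > 0, namely σ = N + γ(p₀/q₀)², such that Xᵀ(d/dt)(P_ζ^{-1}(t))X ≤ σ‖X‖² holds for all X ∈ ℝ^{N_ζ} and all t. -/
/-!
Differentiating `A⁻¹ * A = 1` entrywise (the entries of `A⁻¹` are differentiable by the adjugate
formula) gives `(A⁻¹)' = -A⁻¹ A' A⁻¹`. Applied first to `A = P_S⁻¹` and then to `P_ζ = U P_S Uᵀ`,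
this yields `(P_ζ⁻¹)' = B₁ + Mᵀ Ṗ_{Sζ̄}⁻¹ M` with `M = P_S Uᵀ P_ζ⁻¹`: the block `Uᵀ B₁ U` is
conjugated back to `B₁` because `U P_S Uᵀ = P_ζ`. The `B₁` part is at most `‖Φ_ζ‖² ‖X‖² ≤ N ‖X‖²`
by Cauchy–Schwarz. For the rest, conjugation by the orthogonal `S_ζ` and by the isometry `Uᵀ`
keeps the bounds `q₀ ≤ P ≤ p₀`, so `‖P_ζ⁻¹ X‖ ≤ ‖X‖ / q₀`, and `‖P_S y‖ ≤ p₀ ‖y‖` by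
Cauchy–Schwarz for the positive semidefinite form of `P_S`; hence `‖M X‖ ≤ (p₀ / q₀) ‖X‖`.
-/

open Matrix Topology

namespace Matrix

section Calculus

variable {𝕜 : Type*} [NontriviallyNormedField 𝕜] {l m n o : Type*} {t : 𝕜}

def HasEntrywiseDerivAt (A : 𝕜 → Matrix m n 𝕜) (A' : Matrix m n 𝕜) (t : 𝕜) : Prop :=
  ∀ i j, HasDerivAt (fun s => A s i j) (A' i j) t

theorem hasEntrywiseDerivAt_const (C : Matrix m n 𝕜) :
    HasEntrywiseDerivAt (fun _ => C) 0 t :=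
  fun i j => hasDerivAt_const t (C i j)

theorem HasEntrywiseDerivAt.mul [Fintype m] {A : 𝕜 → Matrix l m 𝕜} {B : 𝕜 → Matrix m n 𝕜}
    {A' : Matrix l m 𝕜} {B' : Matrix m n 𝕜} (hA : HasEntrywiseDerivAt A A' t)
    (hB : HasEntrywiseDerivAt B B' t) :
    HasEntrywiseDerivAt (fun s => A s * B s) (A' * B t + A t * B') t := fun i j => by
  simpa [mul_apply, Finset.sum_add_distrib] using
    HasDerivAt.fun_sum fun k _ => (hA i k).mul (hB k j)

theorem HasEntrywiseDerivAt.const_mul_mul_const [Fintype m] [Fintype n]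
    {A : 𝕜 → Matrix m n 𝕜} {A' : Matrix m n 𝕜} (hA : HasEntrywiseDerivAt A A' t)
    (L : Matrix l m 𝕜) (R : Matrix n o 𝕜) :
    HasEntrywiseDerivAt (fun s => L * A s * R) (L * A' * R) t := by
  simpa using ((hasEntrywiseDerivAt_const L).mul hA).mul (hasEntrywiseDerivAt_const R)

variable [Fintype n] [DecidableEq n] {A : 𝕜 → Matrix n n 𝕜}

theorem differentiableAt_det (hA : ∀ i j, DifferentiableAt 𝕜 (fun s => A s i j) t) :
    DifferentiableAt 𝕜 (fun s => (A s).det) t := by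
  simp only [det_apply']
  exact .fun_sum fun σ _ => (DifferentiableAt.fun_finsetProd fun i _ => hA (σ i) i).const_mul _

theorem differentiableAt_inv_apply (hA : ∀ i j, DifferentiableAt 𝕜 (fun s => A s i j) t)
    (hdet : (A t).det ≠ 0) (i j : n) :
    DifferentiableAt 𝕜 (fun s => (A s)⁻¹ i j) t := by
  simp only [inv_def, Ring.inverse_eq_inv', smul_apply, smul_eq_mul, adjugate_apply]
  refine ((differentiableAt_det hA).inv hdet).mul (differentiableAt_det fun k l => ?_)
  rcases eq_or_ne k j with rfl | hk
  · simpa only [updateRow_self] using differentiableAt_const _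
  · simpa only [updateRow_ne hk] using hA k l

theorem HasEntrywiseDerivAt.inv {A' : Matrix n n 𝕜} (hA : HasEntrywiseDerivAt A A' t)
    (hdet : IsUnit (A t).det) :
    HasEntrywiseDerivAt (fun s => (A s)⁻¹) (-((A t)⁻¹ * A' * (A t)⁻¹)) t := by
  have hdiff : ∀ i j, DifferentiableAt 𝕜 (fun s => A s i j) t :=
    fun i j => (hA i j).differentiableAt
  set B' : Matrix n n 𝕜 := of fun i j => deriv (fun s => (A s)⁻¹ i j) t
  have hB : HasEntrywiseDerivAt (fun s => (A s)⁻¹) B' t :=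
    fun i j => (differentiableAt_inv_apply hdiff hdet.ne_zero i j).hasDerivAt
  have hunit : ∀ᶠ s in 𝓝 t, IsUnit (A s).det :=
    ((differentiableAt_det hdiff).continuousAt.eventually_ne hdet.ne_zero).mono
      fun _ => isUnit_iff_ne_zero.mpr
  have hprod : B' * A t + (A t)⁻¹ * A' = 0 := by
    ext i j
    refine ((hB.mul hA) i j).unique
      ((hasEntrywiseDerivAt_const (1 : Matrix n n 𝕜) i j).congr_of_eventuallyEq ?_)
    filter_upwards [hunit] with s hs using by rw [nonsing_inv_mul _ hs]
  have hB' : B' = -((A t)⁻¹ * A' * (A t)⁻¹) := by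
    rw [← add_eq_zero_iff_eq_neg, ← mul_nonsing_inv_cancel_right (A t) B' hdet, ← add_mul, hprod,
      zero_mul]
  exact hB' ▸ hB

variable [Fintype m] [DecidableEq m]

theorem HasEntrywiseDerivAt.compression_inv {A : 𝕜 → Matrix n n 𝕜} {K : Matrix n n 𝕜}
    (hK : HasEntrywiseDerivAt (fun s => (A s)⁻¹) K t) (hA : ∀ s, IsUnit (A s).det)
    (L : Matrix m n 𝕜) (R : Matrix n m 𝕜) (hC : IsUnit (L * A t * R).det) :
    HasEntrywiseDerivAt (fun s => (L * A s * R)⁻¹)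
      ((L * A t * R)⁻¹ * (L * (A t * K * A t) * R) * (L * A t * R)⁻¹) t := by
  have hA' : HasEntrywiseDerivAt A (-(A t * K * A t)) t := by
    have hAinv : (fun s => (A s)⁻¹⁻¹) = A := funext fun s => nonsing_inv_nonsing_inv _ (hA s)
    have h := hK.inv (isUnit_nonsing_inv_det _ (hA t))
    rwa [hAinv, nonsing_inv_nonsing_inv _ (hA t)] at h
  have h := (hA'.const_mul_mul_const L R).inv hC
  rwa [Matrix.mul_neg, Matrix.neg_mul, Matrix.mul_neg, Matrix.neg_mul, neg_neg] at h

theorem HasEntrywiseDerivAt.compression_inv_of_eq_add {A : 𝕜 → Matrix n n 𝕜}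
    {B : Matrix m m 𝕜} {D : Matrix n n 𝕜} {L : Matrix m n 𝕜} {R : Matrix n m 𝕜}
    (hK : HasEntrywiseDerivAt (fun s => (A s)⁻¹) (R * B * L + D) t) (hA : ∀ s, IsUnit (A s).det)
    (hC : IsUnit (L * A t * R).det) :
    HasEntrywiseDerivAt (fun s => (L * A s * R)⁻¹)
      (B + (L * A t * R)⁻¹ * L * A t * D * (A t * R * (L * A t * R)⁻¹)) t := by
  have hCBC : (L * A t * R)⁻¹ * (L * A t * R * B * (L * A t * R)) * (L * A t * R)⁻¹ = B := by
    rw [Matrix.mul_assoc _ B, nonsing_inv_mul_cancel_left _ _ hC,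
      mul_nonsing_inv_cancel_right _ _ hC]
  convert hK.compression_inv hA L R hC using 1
  conv_lhs => rw [← hCBC]
  simp only [Matrix.mul_add, Matrix.add_mul, Matrix.mul_assoc]

end Calculus

section QuadraticForm

theorem of_ite_mul_transpose_eq_one {m n R : Type*} [Fintype n] [Semiring R] [DecidableEq m]
    [DecidableEq n] {f : m → n} (hf : Function.Injective f) :
    (of fun i j => if j = f i then (1 : R) else 0) *
      (of fun i j => if j = f i then (1 : R) else 0)ᵀ = 1 := by
  ext i k
  simp [mul_apply, one_apply, hf.eq_iff, eq_comm]

variable {m n : Type*} [Fintype m] [Fintype n]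

theorem dotProduct_mulVec_mul_mul_transpose {R : Type*} [CommSemiring R] (M : Matrix m n R)
    (A : Matrix n n R) (x : m → R) :
    x ⬝ᵥ (M * A * Mᵀ) *ᵥ x = (Mᵀ *ᵥ x) ⬝ᵥ A *ᵥ (Mᵀ *ᵥ x) := by
  rw [← mulVec_mulVec, ← mulVec_mulVec, dotProduct_mulVec, mulVec_transpose]

theorem dotProduct_transpose_mulVec_self {R : Type*} [CommSemiring R] [DecidableEq m]
    [DecidableEq n] {M : Matrix m n R} (hM : M * Mᵀ = 1) (x : m → R) :
    (Mᵀ *ᵥ x) ⬝ᵥ (Mᵀ *ᵥ x) = x ⬝ᵥ x := by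
  simpa [hM] using (dotProduct_mulVec_mul_mul_transpose M 1 x).symm

theorem le_dotProduct_mul_mul_transpose_mulVec [DecidableEq m] [DecidableEq n] {M : Matrix m n ℝ}
    (hM : M * Mᵀ = 1) {A : Matrix n n ℝ} {c : ℝ} (hA : ∀ y, c * (y ⬝ᵥ y) ≤ y ⬝ᵥ A *ᵥ y)
    (x : m → ℝ) : c * (x ⬝ᵥ x) ≤ x ⬝ᵥ (M * A * Mᵀ) *ᵥ x := by
  rw [dotProduct_mulVec_mul_mul_transpose, ← dotProduct_transpose_mulVec_self hM x]
  exact hA _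

theorem dotProduct_mul_mul_transpose_mulVec_le [DecidableEq m] [DecidableEq n] {M : Matrix m n ℝ}
    (hM : M * Mᵀ = 1) {A : Matrix n n ℝ} {c : ℝ} (hA : ∀ y, y ⬝ᵥ A *ᵥ y ≤ c * (y ⬝ᵥ y))
    (x : m → ℝ) : x ⬝ᵥ (M * A * Mᵀ) *ᵥ x ≤ c * (x ⬝ᵥ x) := by
  rw [dotProduct_mulVec_mul_mul_transpose, ← dotProduct_transpose_mulVec_self hM x]
  exact hA _

theorem PosDef.mul_mul_transpose_of_mul_transpose_eq_one [DecidableEq m] {A : Matrix n n ℝ}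
    (hA : A.PosDef) {M : Matrix m n ℝ} (hM : M * Mᵀ = 1) : (M * A * Mᵀ).PosDef := by
  have hinj : Function.Injective M.vecMul := fun x y h => by
    simpa [vecMul_vecMul, hM] using congrArg (· ᵥ* Mᵀ) h
  simpa [conjTranspose_eq_transpose_of_trivial] using hA.mul_mul_conjTranspose_same hinj

theorem dotProduct_self_nonneg (x : n → ℝ) : 0 ≤ x ⬝ᵥ x :=
  Finset.sum_nonneg fun _ _ => mul_self_nonneg _

theorem sq_dotProduct_le (x y : n → ℝ) : (x ⬝ᵥ y) ^ 2 ≤ (x ⬝ᵥ x) * (y ⬝ᵥ y) := by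
  simpa only [dotProduct, sq] using Finset.sum_mul_sq_le_sq_mul_sq Finset.univ x y

theorem PosSemidef.sq_dotProduct_mulVec_le {A : Matrix n n ℝ} (hA : A.PosSemidef)
    (x y : n → ℝ) : (x ⬝ᵥ A *ᵥ y) ^ 2 ≤ (x ⬝ᵥ A *ᵥ x) * (y ⬝ᵥ A *ᵥ y) := by
  have hsymm : y ⬝ᵥ A *ᵥ x = x ⬝ᵥ A *ᵥ y := by
    rw [← dotProduct_transpose_mulVec, (isHermitian_iff_isSymm.mp hA.isHermitian).eq]
  have hquad (c : ℝ) :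
      0 ≤ (y ⬝ᵥ A *ᵥ y) * (c * c) + 2 * (x ⬝ᵥ A *ᵥ y) * c + x ⬝ᵥ A *ᵥ x := by
    have := hA.dotProduct_mulVec_nonneg (x + c • y)
    simp only [star_trivial, mulVec_add, mulVec_smul, add_dotProduct, dotProduct_add,
      smul_dotProduct, dotProduct_smul, smul_eq_mul, hsymm] at this
    linarith
  have := discrim_le_zero hquad
  rw [discrim] at this
  linarith

theorem PosSemidef.dotProduct_mulVec_self_le {A : Matrix n n ℝ} (hA : A.PosSemidef) {p : ℝ}
    (hp : 0 ≤ p) (hAp : ∀ x, x ⬝ᵥ A *ᵥ x ≤ p * (x ⬝ᵥ x)) (x : n → ℝ) :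
    (A *ᵥ x) ⬝ᵥ (A *ᵥ x) ≤ p ^ 2 * (x ⬝ᵥ x) := by
  set y := A *ᵥ x
  have hxy : x ⬝ᵥ A *ᵥ y = y ⬝ᵥ y := by
    rw [← (isHermitian_iff_isSymm.mp hA.isHermitian).eq, dotProduct_transpose_mulVec]
  rcases (dotProduct_self_nonneg y).eq_or_lt with h0 | h0
  · rw [← h0]
    exact mul_nonneg (sq_nonneg p) (dotProduct_self_nonneg x)
  have hcs : (y ⬝ᵥ y) * (y ⬝ᵥ y) ≤ (p ^ 2 * (x ⬝ᵥ x)) * (y ⬝ᵥ y) := by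
    calc (y ⬝ᵥ y) * (y ⬝ᵥ y) = (x ⬝ᵥ A *ᵥ y) ^ 2 := by rw [hxy, sq]
      _ ≤ (x ⬝ᵥ A *ᵥ x) * (y ⬝ᵥ A *ᵥ y) := hA.sq_dotProduct_mulVec_le x y
      _ ≤ (p * (x ⬝ᵥ x)) * (p * (y ⬝ᵥ y)) :=
        mul_le_mul (hAp x) (hAp y) (by simpa using hA.dotProduct_mulVec_nonneg y)
          (mul_nonneg hp (dotProduct_self_nonneg x))
      _ = (p ^ 2 * (x ⬝ᵥ x)) * (y ⬝ᵥ y) := by ring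
  exact le_of_mul_le_mul_right hcs h0

theorem sq_mul_dotProduct_self_le {A : Matrix n n ℝ} {q : ℝ} (hq : 0 ≤ q)
    (hAq : ∀ x, q * (x ⬝ᵥ x) ≤ x ⬝ᵥ A *ᵥ x) (x : n → ℝ) :
    q ^ 2 * (x ⬝ᵥ x) ≤ (A *ᵥ x) ⬝ᵥ (A *ᵥ x) := by
  rcases (dotProduct_self_nonneg x).eq_or_lt with h0 | h0
  · rw [← h0, mul_zero]
    exact dotProduct_self_nonneg _
  have hcs : (q ^ 2 * (x ⬝ᵥ x)) * (x ⬝ᵥ x) ≤ ((A *ᵥ x) ⬝ᵥ (A *ᵥ x)) * (x ⬝ᵥ x) := by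
    calc (q ^ 2 * (x ⬝ᵥ x)) * (x ⬝ᵥ x) = (q * (x ⬝ᵥ x)) ^ 2 := by ring
      _ ≤ (x ⬝ᵥ A *ᵥ x) ^ 2 := pow_le_pow_left₀ (mul_nonneg hq h0.le) (hAq x) 2
      _ ≤ (x ⬝ᵥ x) * ((A *ᵥ x) ⬝ᵥ (A *ᵥ x)) := sq_dotProduct_le x (A *ᵥ x)
      _ = ((A *ᵥ x) ⬝ᵥ (A *ᵥ x)) * (x ⬝ᵥ x) := mul_comm _ _
  exact le_of_mul_le_mul_right hcs h0

theorem dotProduct_vecMulVec_self_mulVec (u x : n → ℝ) :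
    x ⬝ᵥ vecMulVec u u *ᵥ x = (u ⬝ᵥ x) ^ 2 := by
  simp [vecMulVec_mulVec, dotProduct_comm x u, sq]

theorem dotProduct_self_le_card {u : n → ℝ} (hu : ∀ i, |u i| ≤ 1) :
    u ⬝ᵥ u ≤ Fintype.card n := by
  calc u ⬝ᵥ u = ∑ i, u i * u i := rfl
    _ ≤ ∑ _i : n, (1 : ℝ) :=
      Finset.sum_le_sum fun i _ => by nlinarith [abs_mul_abs_self (u i), abs_nonneg (u i), hu i]
    _ = Fintype.card n := by simp

theorem dotProduct_vecMulVec_sub_vecMulVec_mulVec_le {u : n → ℝ} (hu : ∀ i, |u i| ≤ 1)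
    (w x : n → ℝ) :
    x ⬝ᵥ (vecMulVec u u - vecMulVec w w) *ᵥ x ≤ Fintype.card n * (x ⬝ᵥ x) := by
  rw [sub_mulVec, dotProduct_sub, dotProduct_vecMulVec_self_mulVec,
    dotProduct_vecMulVec_self_mulVec]
  calc (u ⬝ᵥ x) ^ 2 - (w ⬝ᵥ x) ^ 2 ≤ (u ⬝ᵥ u) * (x ⬝ᵥ x) :=
        (sub_le_self _ (sq_nonneg _)).trans (sq_dotProduct_le u x)
    _ ≤ Fintype.card n * (x ⬝ᵥ x) :=
      mul_le_mul_of_nonneg_right (dotProduct_self_le_card hu) (dotProduct_self_nonneg x)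

theorem PosSemidef.dotProduct_compression_inv_mulVec_le [DecidableEq m] [DecidableEq n]
    {A D : Matrix n n ℝ} (hA : A.PosSemidef) {M : Matrix m n ℝ} (hM : M * Mᵀ = 1)
    (hC : IsUnit (M * A * Mᵀ).det) {p q γ : ℝ} (hp : 0 ≤ p) (hq : 0 < q) (hγ : 0 ≤ γ)
    (hAp : ∀ x, x ⬝ᵥ A *ᵥ x ≤ p * (x ⬝ᵥ x))
    (hCq : ∀ x, q * (x ⬝ᵥ x) ≤ x ⬝ᵥ (M * A * Mᵀ) *ᵥ x)
    (hD : ∀ x, x ⬝ᵥ D *ᵥ x ≤ γ * (x ⬝ᵥ x)) (X : m → ℝ) :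
    X ⬝ᵥ ((M * A * Mᵀ)⁻¹ * M * A * D * (A * Mᵀ * (M * A * Mᵀ)⁻¹)) *ᵥ X ≤
      γ * (p / q) ^ 2 * (X ⬝ᵥ X) := by
  set Q := (M * A * Mᵀ)⁻¹
  have hA_symm : Aᵀ = A := (isHermitian_iff_isSymm.mp hA.isHermitian).eq
  have hN : (Q * M * A)ᵀ = A * Mᵀ * Q := by
    rw [transpose_mul, transpose_mul, transpose_nonsing_inv, transpose_mul, transpose_mul,
      transpose_transpose, hA_symm]
    simp only [Q, Matrix.mul_assoc]
  have hQX : q ^ 2 * ((Q *ᵥ X) ⬝ᵥ (Q *ᵥ X)) ≤ X ⬝ᵥ X := by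
    simpa [mulVec_mulVec, Q, mul_nonsing_inv _ hC] using
      sq_mul_dotProduct_self_le hq.le hCq (Q *ᵥ X)
  have hNX : (A * Mᵀ * Q) *ᵥ X ⬝ᵥ (A * Mᵀ * Q) *ᵥ X ≤ (p / q) ^ 2 * (X ⬝ᵥ X) :=
    calc (A * Mᵀ * Q) *ᵥ X ⬝ᵥ (A * Mᵀ * Q) *ᵥ X
        = A *ᵥ (Mᵀ *ᵥ (Q *ᵥ X)) ⬝ᵥ A *ᵥ (Mᵀ *ᵥ (Q *ᵥ X)) := by
          simp only [mulVec_mulVec, Matrix.mul_assoc]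
      _ ≤ p ^ 2 * (Mᵀ *ᵥ (Q *ᵥ X) ⬝ᵥ Mᵀ *ᵥ (Q *ᵥ X)) := hA.dotProduct_mulVec_self_le hp hAp _
      _ = (p / q) ^ 2 * (q ^ 2 * ((Q *ᵥ X) ⬝ᵥ (Q *ᵥ X))) := by
          rw [dotProduct_transpose_mulVec_self hM]
          field_simp
      _ ≤ (p / q) ^ 2 * (X ⬝ᵥ X) := mul_le_mul_of_nonneg_left hQX (sq_nonneg _)
  rw [← hN, dotProduct_mulVec_mul_mul_transpose, hN]
  calc _ ≤ γ * ((A * Mᵀ * Q) *ᵥ X ⬝ᵥ (A * Mᵀ * Q) *ᵥ X) := hD _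
    _ ≤ γ * ((p / q) ^ 2 * (X ⬝ᵥ X)) := mul_le_mul_of_nonneg_left hNX hγ
    _ = γ * (p / q) ^ 2 * (X ⬝ᵥ X) := by ring

end QuadraticForm

end Matrix

theorem stmt12_general (N Nζ : ℕ) (hle : Nζ ≤ N) (p₀ q₀ γ : ℝ)
    (hq₀ : 0 < q₀) (hp₀ : q₀ ≤ p₀) (hγ : 0 < γ)
    (P : ℝ → Matrix (Fin N) (Fin N) ℝ)
    (hPpos : ∀ t, (P t).PosDef)
    (hPub : ∀ t, ∀ x : Fin N → ℝ, x ⬝ᵥ (P t).mulVec x ≤ p₀ * (x ⬝ᵥ x))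
    (hPlb : ∀ t, ∀ x : Fin N → ℝ, q₀ * (x ⬝ᵥ x) ≤ x ⬝ᵥ (P t).mulVec x)
    (Sζ : Matrix (Fin N) (Fin N) ℝ) (hSζ : Sζ * Sζᵀ = 1)
    (PS : ℝ → Matrix (Fin N) (Fin N) ℝ) (hPS : ∀ t, PS t = Sζ * P t * Sζᵀ)
    (U : Matrix (Fin Nζ) (Fin N) ℝ)
    (hU : U = Matrix.of fun i j => if j = Fin.castLE hle i then (1 : ℝ) else 0)
    (Φζ Φaζ : ℝ → (Fin Nζ → ℝ))
    (hΦζ : ∀ t i, Φζ t i ∈ Set.Icc (0 : ℝ) 1)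
    (B₁ : ℝ → Matrix (Fin Nζ) (Fin Nζ) ℝ)
    (hB₁ : ∀ t, B₁ t = Matrix.vecMulVec (Φζ t) (Φζ t) - Matrix.vecMulVec (Φaζ t) (Φaζ t))
    (D : ℝ → Matrix (Fin N) (Fin N) ℝ)
    (hDub : ∀ t, ∀ x : Fin N → ℝ, x ⬝ᵥ (D t).mulVec x ≤ γ * (x ⬝ᵥ x))
    (hdecomp : ∀ t i j,
      HasDerivAt (fun s => (PS s)⁻¹ i j) ((Uᵀ * B₁ t * U + D t) i j) t)
    (Pζ : ℝ → Matrix (Fin Nζ) (Fin Nζ) ℝ) (hPζ : ∀ t, Pζ t = U * PS t * Uᵀ) :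
    0 < (N : ℝ) + γ * (p₀ / q₀) ^ 2 ∧
    ∀ t, ∀ X : Fin Nζ → ℝ,
      X ⬝ᵥ (Matrix.of fun (i j : Fin Nζ) =>
          deriv (fun s => (Pζ s)⁻¹ i j) t).mulVec X ≤
        ((N : ℝ) + γ * (p₀ / q₀) ^ 2) * (X ⬝ᵥ X) := by
  have hp₀_pos : 0 < p₀ := hq₀.trans_le hp₀
  refine ⟨by positivity, fun t X => ?_⟩
  obtain rfl : Pζ = fun s => U * PS s * Uᵀ := funext hPζ
  have hUUt : U * Uᵀ = 1 := hU ▸ of_ite_mul_transpose_eq_one (Fin.castLE_injective hle)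
  have hPS_pos (s : ℝ) : (PS s).PosDef :=
    hPS s ▸ (hPpos s).mul_mul_transpose_of_mul_transpose_eq_one hSζ
  have hPζ_det : IsUnit (U * PS t * Uᵀ).det := (isUnit_iff_isUnit_det _).mp
    ((hPS_pos t).mul_mul_transpose_of_mul_transpose_eq_one hUUt).isUnit
  have hPS_le : ∀ x, x ⬝ᵥ PS t *ᵥ x ≤ p₀ * (x ⬝ᵥ x) :=
    hPS t ▸ dotProduct_mul_mul_transpose_mulVec_le hSζ (hPub t)
  have hPζ_ge : ∀ x, q₀ * (x ⬝ᵥ x) ≤ x ⬝ᵥ (U * PS t * Uᵀ) *ᵥ x :=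
    le_dotProduct_mul_mul_transpose_mulVec hUUt
      (hPS t ▸ le_dotProduct_mul_mul_transpose_mulVec hSζ (hPlb t))
  have hderiv := HasEntrywiseDerivAt.compression_inv_of_eq_add (hdecomp t)
    (fun s => (isUnit_iff_isUnit_det _).mp (hPS_pos s).isUnit) hPζ_det
  rw [show (of fun i j => deriv (fun s => (U * PS s * Uᵀ)⁻¹ i j) t) = _ from
    ext fun i j => (hderiv i j).deriv, add_mulVec, dotProduct_add, add_mul]
  refine add_le_add ?_ <| (hPS_pos t).posSemidef.dotProduct_compression_inv_mulVec_le hUUt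
    hPζ_det hp₀_pos.le hq₀ hγ.le hPS_le hPζ_ge (hDub t) X
  rw [hB₁]
  refine (dotProduct_vecMulVec_sub_vecMulVec_mulVec_le (fun i => ?_) _ X).trans ?_
  · exact abs_le.mpr ⟨by linarith [(hΦζ t i).1], (hΦζ t i).2⟩
  · simpa using mul_le_mul_of_nonneg_right (Nat.cast_le.mpr hle) (dotProduct_self_nonneg X)

/-- **Lemma 3 of the paper.**
If the SMRLS gain matrix `P(t)` is symmetric positive definite with
`q₀ ≤ λ_min(P) ≤ λ_max(P) ≤ p₀`, `P_S = S_ζ P S_ζᵀ` for a fixed orthogonal `S_ζ`, and the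
derivative of `P_S⁻¹` decomposes as `Ṗ_{Sζ}⁻¹ + Ṗ_{Sζ̄}⁻¹`, where `Ṗ_{Sζ}⁻¹` has block
form `[[B₁, 0], [0, 0]]` (written `Uᵀ B₁ U` with `U = [I 0]`) with
`B₁ = Φ_ζ Φ_ζᵀ − Φ_{aζ} Φ_{aζ}ᵀ` for regressor vectors with components in `[0,1]`, and the
symmetric remainder `Ṗ_{Sζ̄}⁻¹` has `λ_max ≤ γ`, then with `σ = N + γ(p₀/q₀)² > 0` the
principal submatrix `P_ζ = U P_S Uᵀ` satisfies
`Xᵀ (d/dt)(P_ζ⁻¹) X ≤ σ ‖X‖²` for all `X` and `t`. -/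
theorem stmt12 (N Nζ : ℕ) (hle : Nζ ≤ N) (p₀ q₀ γ : ℝ)
    (hq₀ : 0 < q₀) (hp₀ : q₀ ≤ p₀) (hγ : 0 < γ)
    (P : ℝ → Matrix (Fin N) (Fin N) ℝ)
    (hPdiff : ∀ t i j, DifferentiableAt ℝ (fun s => P s i j) t)
    (hPpos : ∀ t, (P t).PosDef)
    (hPub : ∀ t, ∀ x : Fin N → ℝ, x ⬝ᵥ (P t).mulVec x ≤ p₀ * (x ⬝ᵥ x))
    (hPlb : ∀ t, ∀ x : Fin N → ℝ, q₀ * (x ⬝ᵥ x) ≤ x ⬝ᵥ (P t).mulVec x)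
    (Sζ : Matrix (Fin N) (Fin N) ℝ) (hSζ : Sζ * Sζᵀ = 1)
    (PS : ℝ → Matrix (Fin N) (Fin N) ℝ) (hPS : ∀ t, PS t = Sζ * P t * Sζᵀ)
    (U : Matrix (Fin Nζ) (Fin N) ℝ)
    (hU : U = Matrix.of fun i j => if j = Fin.castLE hle i then (1 : ℝ) else 0)
    (Φζ Φaζ : ℝ → (Fin Nζ → ℝ))
    (hΦζ : ∀ t i, Φζ t i ∈ Set.Icc (0 : ℝ) 1)
    (hΦaζ : ∀ t i, Φaζ t i ∈ Set.Icc (0 : ℝ) 1)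
    (B₁ : ℝ → Matrix (Fin Nζ) (Fin Nζ) ℝ)
    (hB₁ : ∀ t, B₁ t = Matrix.vecMulVec (Φζ t) (Φζ t) - Matrix.vecMulVec (Φaζ t) (Φaζ t))
    (D : ℝ → Matrix (Fin N) (Fin N) ℝ)
    (hDsym : ∀ t, (D t).IsHermitian)
    (hDub : ∀ t, ∀ x : Fin N → ℝ, x ⬝ᵥ (D t).mulVec x ≤ γ * (x ⬝ᵥ x))
    (hdecomp : ∀ t i j,
      HasDerivAt (fun s => (PS s)⁻¹ i j) ((Uᵀ * B₁ t * U + D t) i j) t)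
    (Pζ : ℝ → Matrix (Fin Nζ) (Fin Nζ) ℝ) (hPζ : ∀ t, Pζ t = U * PS t * Uᵀ) :
    0 < (N : ℝ) + γ * (p₀ / q₀) ^ 2 ∧
    ∀ t, ∀ X : Fin Nζ → ℝ,
      X ⬝ᵥ (Matrix.of fun (i j : Fin Nζ) =>
          deriv (fun s => (Pζ s)⁻¹ i j) t).mulVec X ≤
        ((N : ℝ) + γ * (p₀ / q₀) ^ 2) * (X ⬝ᵥ X) :=
  stmt12_general N Nζ hle p₀ q₀ γ hq₀ hp₀ hγ P hPpos hPub hPlb Sζ hSζ PS hPS U hU Φζ Φaζ hΦζ B₁ hB₁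
    D hDub hdecomp Pζ hPζ
end
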